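/- Let σ : ℝ → ℝ be C¹ with M₁ ≤ σ′(x) ≤ M₂ for all x ∈ ℝ, where 0 < M₁ ≤ M₂, σ(0) = 0 and x·σ(x) ≥ 0 for all x. Let W be a finite-dimensional subspace of L²(ℝ) ∩ L^∞(ℝ) and let P_W denote the orthogonal projection of L²(ℝ) onto W. Then for every f ∈ W, ‖P_W(σ∘f)‖₂ ≥ M₁ ‖f‖₂. -/

import Mathlib

set_option synthInstance.maxHeartbeats 1000000

/-!
Statement 7: if σ is C¹ with 0 < M₁ ≤ σ′ ≤ M₂, σ(0) = 0 and x·σ(x) ≥ 0, and W is a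
finite-dimensional subspace of L²(ℝ) ∩ L^∞(ℝ), then ‖P_W(σ∘f)‖₂ ≥ M₁‖f‖₂ for f ∈ W.
-/

open MeasureTheory Real
open scoped Classical

/-- The Hilbert space `L²(ℝ)`. -/
noncomputable abbrev H : Type := MeasureTheory.Lp ℝ 2 (volume : Measure ℝ)

/-- The class in `L²(ℝ)` of a function (zero if the function is not square integrable). -/
noncomputable def toLp2 (f : ℝ → ℝ) : H :=
  if h : MemLp f 2 volume then h.toLp f else 0

/-!
Since `σ′ ≥ M₁` and `σ 0 = 0`, the mean value theorem gives `M₁ t² ≤ t σ(t)`, so integrating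
against `f` yields `M₁ ‖f‖² ≤ ⟪σ ∘ f, f⟫`. For `f ∈ W` this inner product does not change when
`σ ∘ f` is replaced by its projection onto `W`, and Cauchy–Schwarz gives
`M₁ ‖f‖² ≤ ‖P_W (σ ∘ f)‖ ‖f‖`. As `σ′` is bounded, `σ` is Lipschitz, so `toLp2 (σ ∘ f)` is the
genuine class of `σ ∘ f` in `L²`.
-/

open scoped RealInnerProductSpace

theorem Submodule.mul_norm_le_norm_orthogonalProjectionOnto {E : Type*} [NormedAddCommGroup E]
    [InnerProductSpace ℝ E] (K : Submodule ℝ E) [K.HasOrthogonalProjection] {u v : E}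
    (hv : v ∈ K) {M : ℝ} (h : M * ‖v‖ ^ 2 ≤ ⟪u, v⟫) :
    M * ‖v‖ ≤ ‖(K.orthogonalProjectionOnto u : E)‖ := by
  rcases (norm_nonneg v).eq_or_lt with hv0 | hv0
  · simp [← hv0]
  have hinner : ⟪(K.orthogonalProjectionOnto u : E), v⟫ = ⟪u, v⟫ :=
    K.inner_orthogonalProjectionOnto_eq_of_mem_right ⟨v, hv⟩ u
  refine le_of_mul_le_mul_right ?_ hv0
  calc M * ‖v‖ * ‖v‖ = M * ‖v‖ ^ 2 := by ring
    _ ≤ ⟪(K.orthogonalProjectionOnto u : E), v⟫ := hinner ▸ h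
    _ ≤ ‖(K.orthogonalProjectionOnto u : E)‖ * ‖v‖ := real_inner_le_norm _ _

theorem mul_sq_le_mul_of_le_deriv {σ : ℝ → ℝ} (hσ : Differentiable ℝ σ) (hσ0 : σ 0 = 0) {M : ℝ}
    (hM : ∀ x, M ≤ deriv σ x) (t : ℝ) : M * t ^ 2 ≤ t * σ t := by
  rcases le_total 0 t with ht | ht
  · have := mul_sub_le_image_sub_of_le_deriv hσ hM ht
    rw [hσ0, sub_zero, sub_zero] at this
    nlinarith
  · have := mul_sub_le_image_sub_of_le_deriv hσ hM ht
    rw [hσ0, zero_sub, zero_sub] at this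
    nlinarith

theorem lipschitzWith_of_le_deriv_le {σ : ℝ → ℝ} (hσ : Differentiable ℝ σ) {a b : ℝ}
    (h : ∀ x, a ≤ deriv σ x ∧ deriv σ x ≤ b) : LipschitzWith (max ‖a‖₊ ‖b‖₊) σ :=
  lipschitzWith_of_nnnorm_deriv_le hσ fun x => by
    rw [← NNReal.coe_le_coe, NNReal.coe_max, coe_nnnorm, coe_nnnorm, coe_nnnorm]
    exact abs_le_max_abs_abs (h x).1 (h x).2

theorem mul_sq_norm_le_inner_compLp {α : Type*} [MeasurableSpace α] {μ : Measure α}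
    {σ : ℝ → ℝ} {c : NNReal} (hσ : LipschitzWith c σ) (hσ0 : σ 0 = 0) {M : ℝ}
    (hM : ∀ t, M * t ^ 2 ≤ t * σ t) (f : Lp ℝ 2 μ) :
    M * ‖f‖ ^ 2 ≤ ⟪hσ.compLp hσ0 f, f⟫ := by
  suffices 0 ≤ ⟪hσ.compLp hσ0 f - M • f, f⟫ by
    rwa [inner_sub_left, real_inner_smul_left, real_inner_self_eq_norm_sq, sub_nonneg] at this
  rw [L2.inner_def]
  refine integral_nonneg_of_ae ?_
  filter_upwards [Lp.coeFn_sub (hσ.compLp hσ0 f) (M • f), Lp.coeFn_smul M f,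
    hσ.coeFn_compLp hσ0 f] with x hsub hsmul hcomp
  rw [hsub, Pi.sub_apply, hsmul, hcomp, Pi.smul_apply, Function.comp_apply, smul_eq_mul,
    RCLike.inner_apply, conj_trivial, Pi.zero_apply]
  nlinarith [hM (f x)]

theorem toLp2_comp_eq_compLp {σ : ℝ → ℝ} {c : NNReal} (hσ : LipschitzWith c σ) (hσ0 : σ 0 = 0)
    (f : H) : toLp2 (fun x => σ (f x)) = hσ.compLp hσ0 f := by
  have hmem : MemLp (fun x => σ (f x)) 2 volume := hσ.comp_memLp hσ0 (Lp.memLp f)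
  rw [toLp2, dif_pos hmem]
  exact Lp.ext (hmem.coeFn_toLp.trans (hσ.coeFn_compLp hσ0 f).symm)

theorem norm_proj_nemytskii_ge_general
    (M₁ M₂ : ℝ)
    (σ : ℝ → ℝ) (hσC1 : ContDiff ℝ 1 σ)
    (hσderiv : ∀ x : ℝ, M₁ ≤ deriv σ x ∧ deriv σ x ≤ M₂)
    (hσ0 : σ 0 = 0)
    (W : Submodule ℝ H) [FiniteDimensional ℝ W]
    (f : H) (hf : f ∈ W) :
    M₁ * ‖f‖ ≤ ‖(Submodule.orthogonalProjectionOnto W (toLp2 fun x => σ (f x)) : H)‖ := by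
  have hdiff : Differentiable ℝ σ := hσC1.differentiable one_ne_zero
  have hlip := lipschitzWith_of_le_deriv_le hdiff hσderiv
  rw [toLp2_comp_eq_compLp hlip hσ0]
  exact W.mul_norm_le_norm_orthogonalProjectionOnto hf <| mul_sq_norm_le_inner_compLp hlip hσ0
    (mul_sq_le_mul_of_le_deriv hdiff hσ0 fun x => (hσderiv x).1) f

theorem norm_proj_nemytskii_ge
    (M₁ M₂ : ℝ) (hM₁ : 0 < M₁) (hM₁₂ : M₁ ≤ M₂)
    (σ : ℝ → ℝ) (hσC1 : ContDiff ℝ 1 σ)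
    (hσderiv : ∀ x : ℝ, M₁ ≤ deriv σ x ∧ deriv σ x ≤ M₂)
    (hσ0 : σ 0 = 0) (hσsign : ∀ x : ℝ, 0 ≤ x * σ x)
    (W : Submodule ℝ H) [FiniteDimensional ℝ W]
    (hWbdd : ∀ f ∈ W, MemLp (⇑f) ⊤ volume)
    (f : H) (hf : f ∈ W) :
    M₁ * ‖f‖ ≤ ‖(Submodule.orthogonalProjectionOnto W (toLp2 fun x => σ (f x)) : H)‖ :=
  norm_proj_nemytskii_ge_general M₁ M₂ σ hσC1 hσderiv hσ0 W f hf
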